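/- Let T be a finitary monad on Set and F : Set^T ⥤ Set^T finitary, preserving surjective T-algebra morphisms and sifted colimits. For any finite set X and any function f : X → φF, there exist a finite set Y, an F-coalgebra d : TY → F(TY), and a function g : X → Y such that f = inj_d ∘ η_Y ∘ g, where inj_d : TY → φF is the colimit injection and η is the unit of T. -/

import Mathlib

/-!
Colimits of `F`-coalgebras are computed in `T`-algebras, and a colimit of `T`-algebras is a
quotient of the free algebra on the disjoint union of the carriers. Restricting the diagram to
the small, equivalent family of coalgebras on the algebras `T (Fin n)`, every element of `φF` is
therefore the image of a term over finitely many elements of these carriers (`T` is finitary), and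
finitely many elements of `φF` come from a single finite coproduct `T Y₁` of such coalgebras:
`f x = inj (t x)` with `t x ∈ T Y₁`. The algebra map `T (Y₁ ⊕ X) → T Y₁` that is `η` on `Y₁` and
sends `x` to `t x` is split surjective; since `F` preserves surjections, the coalgebra structure
of `T Y₁` lifts along it, and `g = Sum.inr` does the job.
-/

open CategoryTheory CategoryTheory.Limits

/-- An `F`-coalgebra has free finitely generated carrier. -/
def Pffg (T : Monad (Type)) (F : T.Algebra ⥤ T.Algebra)
    (C : Endofunctor.Coalgebra F) : Prop :=
  ∃ X : Type, Finite X ∧ Nonempty (C.V ≅ T.free.obj X)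

/-- The coalgebra on a free finitely generated carrier as an object of the full
subcategory. -/
def ffgObj (T : Monad (Type)) (F : T.Algebra ⥤ T.Algebra) (X : Type) (hX : Finite X)
    (c : T.free.obj X ⟶ F.obj (T.free.obj X)) : ObjectProperty.FullSubcategory (Pffg T F) :=
  ⟨⟨T.free.obj X, c⟩, X, hX, ⟨Iso.refl _⟩⟩

universe u

namespace CategoryTheory.Monad

variable {T : Monad (Type u)}

def freeLift {X : Type u} {A : T.Algebra} (g : X → A.A) : T.free.obj X ⟶ A :=
  (T.adj.homEquiv X A).symm (↾g)

@[simp]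
lemma freeLift_η {X : Type u} {A : T.Algebra} (g : X → A.A) (x : X) :
    (freeLift g).f (T.η.app X x) = g x :=
  ConcreteCategory.congr_hom ((T.adj.homEquiv X A).apply_symm_apply (↾g)) x

lemma free_hom_ext {X : Type u} {A : T.Algebra} {g h : T.free.obj X ⟶ A}
    (H : ∀ x, g.f (T.η.app X x) = h.f (T.η.app X x)) : g = h :=
  (T.adj.homEquiv X A).injective (by ext x; exact H x)

@[simp]
lemma free_map_f_η {X Y : Type u} (g : X → Y) (x : X) :
    (T.free.map (↾g)).f (T.η.app X x) = T.η.app Y (g x) :=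
  (T.η.naturality_apply (↾g) x).symm

namespace Algebra

lemma Hom.f_a_map {A Z : T.Algebra} (h : A ⟶ Z) {W : Type u} (g : W → A.A) (u : T.obj W) :
    h.f (A.a (T.map (↾g) u)) = Z.a (T.map (↾fun w => h.f (g w)) u) :=
  (ConcreteCategory.congr_hom h.h (T.map (↾g) u)).symm.trans
    (congrArg Z.a (T.map_comp_apply (↾g) h.f u).symm)

section KerQuotient

variable {A : T.Algebra} {ι : Type*} {Z : ι → T.Algebra} (h : ∀ i, A ⟶ Z i)

def kerSetoid : Setoid A.A where
  r a b := ∀ i, (h i).f a = (h i).f b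
  iseqv := ⟨fun _ _ => rfl, fun hab i => (hab i).symm, fun hab hbc i => (hab i).trans (hbc i)⟩

lemma mk_a_map_eq {W : Type u} {g₁ g₂ : W → A.A} (hg : ∀ w, kerSetoid h (g₁ w) (g₂ w))
    (u : T.obj W) :
    (_root_.Quotient.mk (kerSetoid h) (A.a (T.map (↾g₁) u)) : _root_.Quotient (kerSetoid h)) =
      _root_.Quotient.mk _ (A.a (T.map (↾g₂) u)) := by
  refine _root_.Quotient.sound fun i => ?_
  have hi : (fun w => (h i).f (g₁ w)) = fun w => (h i).f (g₂ w) := funext fun w => hg w i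
  simp only [Hom.f_a_map, hi]

/-- The joint kernel of algebra morphisms is a congruence, so the choice of representatives by
`Quotient.out` does not matter (`kerQuotientStr_map_mk`). -/
noncomputable def kerQuotientStr (t : T.obj (_root_.Quotient (kerSetoid h))) :
    _root_.Quotient (kerSetoid h) :=
  _root_.Quotient.mk _ (A.a (T.map (↾_root_.Quotient.out) t))

lemma kerQuotientStr_map_mk {W : Type u} (g : W → A.A) (u : T.obj W) :
    kerQuotientStr h (T.map (↾fun w => _root_.Quotient.mk (kerSetoid h) (g w)) u) =
      _root_.Quotient.mk _ (A.a (T.map (↾g) u)) := by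
  unfold kerQuotientStr
  rw [← T.map_comp_apply]
  exact mk_a_map_eq h (fun w => _root_.Quotient.mk_out (g w)) u

noncomputable def kerQuotient : T.Algebra where
  A := _root_.Quotient (kerSetoid h)
  a := ↾kerQuotientStr h
  unit := by
    ext q
    change _root_.Quotient.mk _ (A.a (T.map (↾_root_.Quotient.out) (T.η.app _ q))) = q
    rw [← T.η.naturality_apply, ← ConcreteCategory.comp_apply, A.unit]
    exact _root_.Quotient.out_eq q
  assoc := by
    ext t
    change kerQuotientStr h (T.μ.app _ t) = kerQuotientStr h
      (T.map (↾fun w => _root_.Quotient.mk _ (A.a (T.map (↾_root_.Quotient.out) w))) t)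
    rw [kerQuotientStr_map_mk, kerQuotientStr,
      ← T.μ.naturality_apply, ← ConcreteCategory.comp_apply, A.assoc,
      ConcreteCategory.comp_apply, Functor.comp_map, ← T.map_comp_apply]
    rfl

noncomputable def toKerQuotient : A ⟶ kerQuotient h where
  f := ↾_root_.Quotient.mk _
  h := by
    ext t
    change kerQuotientStr h (T.map (↾fun a => _root_.Quotient.mk _ (_root_.id a)) t) = _
    rw [kerQuotientStr_map_mk]
    exact congrArg _ (congrArg A.a (T.map_id_apply _ t))

lemma toKerQuotient_surjective : Function.Surjective (toKerQuotient h).f :=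
  _root_.Quotient.mk_surjective

noncomputable def kerQuotientLift (i : ι) : kerQuotient h ⟶ Z i where
  f := ↾_root_.Quotient.lift (h i).f fun _ _ (hab : kerSetoid h _ _) => hab i
  h := by
    have hlift : (_root_.Quotient.lift (h i).f fun _ _ (hab : kerSetoid h _ _) => hab i) =
        fun q => (h i).f q.out := by
      ext q
      conv_lhs => rw [← _root_.Quotient.out_eq q]
      rfl
    ext t
    refine Eq.trans ?_ (Hom.f_a_map (h i) _root_.Quotient.out t).symm
    rw [hlift]
    rfl

@[simp]
lemma toKerQuotient_kerQuotientLift (i : ι) : toKerQuotient h ≫ kerQuotientLift h i = h i := by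
  ext
  rfl

lemma kerQuotient_hom_ext {Y : T.Algebra} {g₁ g₂ : kerQuotient h ⟶ Y}
    (H : toKerQuotient h ≫ g₁ = toKerQuotient h ≫ g₂) : g₁ = g₂ := by
  ext q
  obtain ⟨a, rfl⟩ := toKerQuotient_surjective h q
  exact ConcreteCategory.congr_hom (congrArg Hom.f H) a

end KerQuotient

end Algebra

section SmallColimits

variable {J : Type u} [SmallCategory J] (D : J ⥤ T.Algebra)

noncomputable def sigmaFreeDesc (s : Cocone D) : T.free.obj (Σ j, (D.obj j).A) ⟶ s.pt :=
  freeLift fun p => (s.ι.app p.1).f p.2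

@[simp]
lemma sigmaFreeDesc_η (s : Cocone D) (j : J) (x : (D.obj j).A) :
    (sigmaFreeDesc D s).f (T.η.app _ ⟨j, x⟩) = (s.ι.app j).f x :=
  freeLift_η _ _

noncomputable abbrev colimitAlgebra : T.Algebra :=
  Algebra.kerQuotient (sigmaFreeDesc D)

noncomputable def colimitAlgebraι (j : J) : D.obj j ⟶ colimitAlgebra D where
  f := ↾fun x => (Algebra.toKerQuotient (sigmaFreeDesc D)).f (T.η.app _ ⟨j, x⟩)
  h := by
    ext t
    refine (Algebra.kerQuotientStr_map_mk (sigmaFreeDesc D)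
      (fun x => T.η.app (Σ j, (D.obj j).A) ⟨j, x⟩) t).trans
      (_root_.Quotient.sound fun s => ?_)
    refine (Algebra.Hom.f_a_map (sigmaFreeDesc D s) _ t).trans ?_
    simp only [sigmaFreeDesc_η]
    exact ConcreteCategory.congr_hom (s.ι.app j).h t

noncomputable def colimitCocone : Cocone D where
  pt := colimitAlgebra D
  ι :=
    { app := colimitAlgebraι D
      naturality := fun j j' u => by
        ext x
        refine _root_.Quotient.sound fun s => ?_
        simp only [sigmaFreeDesc_η]
        exact ConcreteCategory.congr_hom (congrArg Algebra.Hom.f (s.w u)) x }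

noncomputable def isColimitColimitCocone : IsColimit (colimitCocone D) where
  desc s := Algebra.kerQuotientLift (sigmaFreeDesc D) s
  fac s j := by
    ext x
    exact sigmaFreeDesc_η D s j x
  uniq s m hm := by
    refine Algebra.kerQuotient_hom_ext _ (free_hom_ext fun p => ?_)
    rw [Algebra.toKerQuotient_kerQuotientLift]
    exact (ConcreteCategory.congr_hom (congrArg Algebra.Hom.f (hm p.1)) p.2).trans
      (sigmaFreeDesc_η D s p.1 p.2).symm

lemma sigmaFreeDesc_surjective_of_isColimit {c : Cocone D} (hc : IsColimit c) :
    Function.Surjective (sigmaFreeDesc D c).f := by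
  let e := (isColimitColimitCocone D).coconePointUniqueUpToIso hc
  have hfac : sigmaFreeDesc D c = Algebra.toKerQuotient (sigmaFreeDesc D) ≫ e.hom := by
    refine free_hom_ext fun ⟨j, x⟩ => ?_
    rw [sigmaFreeDesc_η,
      ← IsColimit.comp_coconePointUniqueUpToIso_hom (isColimitColimitCocone D) hc j]
    rfl
  rw [hfac]
  exact ((Monad.forget T).mapIso e).toEquiv.surjective.comp (Algebra.toKerQuotient_surjective _)

end SmallColimits

end CategoryTheory.Monad

namespace CategoryTheory.Endofunctor.Coalgebra

variable {C : Type*} [Category C] {F : C ⥤ C} {J : Type*} [Category J] {G : J ⥤ Coalgebra F}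
  {c : Cocone (G ⋙ forget F)} (hc : IsColimit c)

def liftedStr : c.pt ⟶ F.obj c.pt :=
  hc.desc
    { pt := F.obj c.pt
      ι :=
        { app := fun j => (G.obj j).str ≫ F.map (c.ι.app j)
          naturality := fun j j' u => by
            have hw : (G.map u).f ≫ c.ι.app j' = c.ι.app j := c.w u
            simp only [Functor.const_obj_obj, Functor.const_obj_map, Category.comp_id]
            erw [← reassoc_of% (G.map u).h, ← F.map_comp, hw]
            rfl } }

lemma ι_liftedStr (j : J) : c.ι.app j ≫ liftedStr hc = (G.obj j).str ≫ F.map (c.ι.app j) :=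
  hc.fac _ j

def liftedCocone : Cocone G where
  pt := ⟨c.pt, liftedStr hc⟩
  ι :=
    { app := fun j => ⟨c.ι.app j, (ι_liftedStr hc j).symm⟩
      naturality := fun j j' u => by
        ext
        exact (c.w u).trans (Category.comp_id _).symm }

def isColimitLiftedCocone : IsColimit (liftedCocone hc) where
  desc s :=
    { f := hc.desc ((forget F).mapCocone s)
      h := hc.hom_ext fun j => by
        have hs : c.ι.app j ≫ hc.desc ((forget F).mapCocone s) = (s.ι.app j).f :=
          hc.fac ((forget F).mapCocone s) j
        erw [reassoc_of% (ι_liftedStr hc j), Category.assoc, ← F.map_comp, hs, reassoc_of% hs,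
          (s.ι.app j).h]
        rfl }
  fac s j := by
    ext
    exact hc.fac ((forget F).mapCocone s) j
  uniq s m hm := by
    ext
    exact hc.uniq ((forget F).mapCocone s) m.f fun j => congrArg Hom.f (hm j)

instance preservesColimit_forget [HasColimit (G ⋙ forget F)] : PreservesColimit G (forget F) :=
  preservesColimit_of_preserves_colimit_cocone (isColimitLiftedCocone (colimit.isColimit _))
    (colimit.isColimit _)

end CategoryTheory.Endofunctor.Coalgebra

lemma CategoryTheory.Functor.exists_finite_set_map_val (G : Type u ⥤ Type u)
    [PreservesFilteredColimits G] {X B : Type u} [Finite X] (t : X → G.obj B) :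
    ∃ A : Set B, A.Finite ∧
      ∃ y : X → G.obj A, ∀ x, G.map (↾Subtype.val) (y x) = t x := by
  have := Cardinal.fact_isRegular_aleph0.{u}
  have hc := isColimitOfPreserves G (HasCardinalLT.Set.isColimitCocone B _ le_rfl)
  choose j y hy using fun x => Types.jointly_surjective_of_isColimit hc (t x)
  have hX : HasCardinalLT X Cardinal.aleph0 := (hasCardinalLT_aleph0_iff X).2 inferInstance
  let m := IsCardinalFiltered.max j hX
  refine ⟨m.1, Set.finite_coe_iff.mp ((hasCardinalLT_aleph0_iff _).1 m.2),
    fun x => G.map ((HasCardinalLT.Set.functor B _).map (IsCardinalFiltered.toMax j hX x)) (y x),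
    fun x => ?_⟩
  rw [← hy x]
  exact (G.map_comp_apply _ _ _).symm

namespace CategoryTheory.Monad

variable {T : Monad (Type u)} {F : T.Algebra ⥤ T.Algebra}

noncomputable def sigmaFreeStr {I : Type u} {Y : I → Type u}
    (c : ∀ i, T.free.obj (Y i) ⟶ F.obj (T.free.obj (Y i))) :
    T.free.obj (Σ i, Y i) ⟶ F.obj (T.free.obj (Σ i, Y i)) :=
  freeLift fun p => (F.map (T.free.map (↾Sigma.mk p.1))).f ((c p.1).f (T.η.app _ p.2))

def sigmaFreeι {I : Type u} {Y : I → Type u}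
    (c : ∀ i, T.free.obj (Y i) ⟶ F.obj (T.free.obj (Y i))) (i : I) :
    (⟨T.free.obj (Y i), c i⟩ : Endofunctor.Coalgebra F) ⟶
      ⟨T.free.obj (Σ i, Y i), sigmaFreeStr c⟩ where
  f := T.free.map (↾Sigma.mk i)
  h := free_hom_ext fun y => by
    change (F.map _).f ((c i).f (T.η.app _ y)) =
      (sigmaFreeStr c).f ((T.free.map _).f (T.η.app _ y))
    rw [free_map_f_η, sigmaFreeStr, freeLift_η]

lemma exists_str_comp_eq_of_surjective {Z : Type u} {A : Endofunctor.Coalgebra F}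
    (p : T.free.obj Z ⟶ A.V) (hp : Function.Surjective (F.map p).f) :
    ∃ d : T.free.obj Z ⟶ F.obj (T.free.obj Z), d ≫ F.map p = p ≫ A.str := by
  choose lift hlift using fun z => hp (A.str.f (p.f (T.η.app Z z)))
  exact ⟨freeLift lift, free_hom_ext fun z =>
    (congrArg (F.map p).f (freeLift_η lift z)).trans (hlift z)⟩

end CategoryTheory.Monad

namespace Pffg

open Monad

variable {T : Monad (Type)} {F : T.Algebra ⥤ T.Algebra}

variable (T F) in
/-- Up to isomorphism these are all the objects of `Pffg T F`, but they form a small type. -/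
abbrev FinCoalg : Type := Σ n : ℕ, (T.free.obj (Fin n) ⟶ F.obj (T.free.obj (Fin n)))

abbrev FinCoalg.toFfg (k : FinCoalg T F) : ObjectProperty.FullSubcategory (Pffg T F) :=
  ffgObj T F (Fin k.1) inferInstance k.2

instance : (inducedFunctor (FinCoalg.toFfg (T := T) (F := F))).EssSurj where
  mem_essImage j := by
    obtain ⟨X, _, ⟨e⟩⟩ := j.property
    obtain ⟨n, ⟨σ⟩⟩ := Finite.exists_equiv_fin X
    let e' := e ≪≫ T.free.mapIso σ.toIso
    exact ⟨⟨n, e'.inv ≫ j.obj.str ≫ F.map e'.hom⟩,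
      ⟨ObjectProperty.isoMk _ (Endofunctor.Coalgebra.isoMk e'.symm (by
        change (e'.inv ≫ j.obj.str ≫ F.map e'.hom) ≫ F.map e'.inv = _
        simp only [Category.assoc, ← F.map_comp, Iso.hom_inv_id, F.map_id, Category.comp_id]
        rfl))⟩⟩

instance : (inducedFunctor (FinCoalg.toFfg (T := T) (F := F))).IsEquivalence where

variable (T F) in
abbrev finDiagram :
    InducedCategory (ObjectProperty.FullSubcategory (Pffg T F)) FinCoalg.toFfg ⥤ T.Algebra :=
  inducedFunctor FinCoalg.toFfg ⋙ ObjectProperty.ι (Pffg T F) ⋙ Endofunctor.Coalgebra.forget F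

noncomputable abbrev finCocone [HasColimit (ObjectProperty.ι (Pffg T F))] :
    Cocone (finDiagram T F) :=
  ((Endofunctor.Coalgebra.forget F).mapCocone
    (colimit.cocone (ObjectProperty.ι (Pffg T F)))).whisker (inducedFunctor FinCoalg.toFfg)

noncomputable def isColimitFinCocone [HasColimit (ObjectProperty.ι (Pffg T F))] :
    IsColimit (finCocone (T := T) (F := F)) :=
  have : HasColimit (ObjectProperty.ι (Pffg T F) ⋙ Endofunctor.Coalgebra.forget F) :=
    have : HasColimit (finDiagram T F) := ⟨⟨⟨_, isColimitColimitCocone _⟩⟩⟩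
    Functor.Final.hasColimit_of_comp (inducedFunctor FinCoalg.toFfg)
  (Functor.Final.isColimitWhiskerEquiv _ _).symm
    (isColimitOfPreserves (Endofunctor.Coalgebra.forget F) (colimit.isColimit _))

theorem exists_eq_colimit_ι [PreservesFilteredColimits (T : Type ⥤ Type)]
    [HasColimit (ObjectProperty.ι (Pffg T F))] {X : Type} [Finite X]
    (f : X → (colimit (ObjectProperty.ι (Pffg T F))).V.A) :
    ∃ (Y : Type) (hY : Finite Y) (d : T.free.obj Y ⟶ F.obj (T.free.obj Y)) (t : X → T.obj Y),
      ∀ x, f x = (colimit.ι (ObjectProperty.ι (Pffg T F)) (ffgObj T F Y hY d)).f.f (t x) := by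
  choose t ht using fun x => sigmaFreeDesc_surjective_of_isColimit _ isColimitFinCocone (f x)
  obtain ⟨A, hA, y, hy⟩ := (T : Type ⥤ Type).exists_finite_set_map_val t
  have := hA.to_subtype
  let str : ∀ i : A, _ := fun i => i.1.1.2
  let C := ffgObj T F (Σ i : A, Fin i.1.1.1) inferInstance (sigmaFreeStr str)
  let φ : A → (T.free.obj (Σ i : A, Fin i.1.1.1)).A := fun i =>
    (T.free.map (↾Sigma.mk i)).f i.1.2
  have hfactor : T.free.map (↾Subtype.val) ≫ sigmaFreeDesc _ finCocone =
      freeLift φ ≫ (colimit.ι (ObjectProperty.ι (Pffg T F)) C).f := by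
    -- on a generator `⟨k, e⟩` both sides are `ι_k e`, by the cocone condition along `sigmaFreeι`
    refine free_hom_ext fun i => ?_
    have hw := colimit.w (ObjectProperty.ι (Pffg T F))
      (ObjectProperty.homMk (sigmaFreeι str i) : (i.1.1).toFfg ⟶ C)
    change (sigmaFreeDesc _ finCocone).f ((T.free.map (↾Subtype.val)).f (T.η.app A i)) =
      (colimit.ι (ObjectProperty.ι (Pffg T F)) C).f.f ((freeLift φ).f (T.η.app A i))
    rw [free_map_f_η, freeLift_η]
    exact (sigmaFreeDesc_η _ _ i.1.1 i.1.2).trans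
      (ConcreteCategory.congr_hom
        (congrArg Algebra.Hom.f (congrArg Endofunctor.Coalgebra.Hom.f hw)) i.1.2).symm
  refine ⟨_, inferInstance, sigmaFreeStr str, fun x => (freeLift φ).f (y x), fun x => ?_⟩
  rw [← ht x, ← hy x]
  exact ConcreteCategory.congr_hom (congrArg Algebra.Hom.f hfactor) (y x)

end Pffg

open Monad in
theorem map_into_phiF_factors_general
    (T : Monad (Type)) [PreservesFilteredColimits (T : Type ⥤ Type)]
    (F : T.Algebra ⥤ T.Algebra)
    (hsurj : ∀ {A B : T.Algebra} (f : A ⟶ B), Function.Surjective f.f →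
      Function.Surjective (F.map f).f)
    [HasColimit (ObjectProperty.ι (Pffg T F))]
    (X : Type) [Finite X]
    (f : X → (colimit (ObjectProperty.ι (Pffg T F))).V.A) :
    ∃ (Y : Type) (hY : Finite Y) (d : T.free.obj Y ⟶ F.obj (T.free.obj Y)) (g : X → Y),
      ∀ x : X,
        f x = (colimit.ι (ObjectProperty.ι (Pffg T F)) (ffgObj T F Y hY d)).f.f
          (T.η.app Y (g x)) := by
  obtain ⟨Y, hY, d, t, hf⟩ := Pffg.exists_eq_colimit_ι f
  let p : T.free.obj (Y ⊕ X) ⟶ T.free.obj Y := freeLift (Sum.elim (T.η.app Y) t)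
  have hsection : T.free.map (↾Sum.inl) ≫ p = 𝟙 _ :=
    free_hom_ext fun y => (congrArg p.f (free_map_f_η Sum.inl y)).trans (freeLift_η _ (Sum.inl y))
  have hp : Function.Surjective p.f := fun v =>
    ⟨(T.free.map (↾Sum.inl)).f v,
      ConcreteCategory.congr_hom (congrArg Algebra.Hom.f hsection) v⟩
  obtain ⟨d', hd'⟩ :=
    exists_str_comp_eq_of_surjective (A := ⟨T.free.obj Y, d⟩) p (hsurj p hp)
  refine ⟨Y ⊕ X, inferInstance, d', Sum.inr, fun x => ?_⟩
  have hw := colimit.w (ObjectProperty.ι (Pffg T F))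
    (ObjectProperty.homMk ⟨p, hd'⟩ :
      ffgObj T F (Y ⊕ X) inferInstance d' ⟶ ffgObj T F Y hY d)
  rw [hf x, ← hw]
  exact congrArg _ (freeLift_η (A := T.free.obj Y) (Sum.elim (T.η.app Y) t) (Sum.inr x)).symm

/-- Every map from a finite set `X` into (the underlying set of) `φF` factors through
the unit `η_Y` followed by the colimit injection of some coalgebra with free finitely
generated carrier `TY`. -/
theorem map_into_phiF_factors
    (T : Monad (Type)) [PreservesFilteredColimits (T : Type ⥤ Type)]
    (F : T.Algebra ⥤ T.Algebra) [PreservesFilteredColimits F]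
    (hsurj : ∀ {A B : T.Algebra} (f : A ⟶ B), Function.Surjective f.f →
      Function.Surjective (F.map f).f)
    (hsift : ∀ (J : Type) (_ : SmallCategory J) (_ : IsSifted J),
      Nonempty (PreservesColimitsOfShape J F))
    [HasColimit (ObjectProperty.ι (Pffg T F))]
    (X : Type) [Finite X]
    (f : X → (colimit (ObjectProperty.ι (Pffg T F))).V.A) :
    ∃ (Y : Type) (hY : Finite Y) (d : T.free.obj Y ⟶ F.obj (T.free.obj Y)) (g : X → Y),
      ∀ x : X,
        f x = (colimit.ι (ObjectProperty.ι (Pffg T F)) (ffgObj T F Y hY d)).f.f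
          (T.η.app Y (g x)) :=
  map_into_phiF_factors_general T F hsurj X f
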